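/- arXiv:1208.4930 — 5 statements merged into one kernel-verified Lean document; each statement's English description precedes it below -/
import Mathlib

section
/- The rational plane ℚ² ⊆ ℝ² extends linearly in 2D: there exists a linearly regular 2-dimensional flat S ⊆ ℝ², a positive real ε, and a point x ∈ S ∩ ℚ² such that every point u of S with d(x,u) < ε lies in ℚ². (Concretely, one may take S = ℚ² itself, which is a linearly regular 2-dimensional flat.) -/
variable {n : ℕ}

/-- Euclidean betweenness: `t` lies between `s` and `u`. -/
def Beta (s t u : EuclideanSpace ℝ (Fin n)) : Prop :=
  dist s u = dist s t + dist t u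

/-- Strict betweenness. -/
def BetaS (s t u : EuclideanSpace ℝ (Fin n)) : Prop :=
  Beta s t u ∧ s ≠ t ∧ t ≠ u

/-- Three points are collinear (Tarski style). -/
def Coll (s t u : EuclideanSpace ℝ (Fin n)) : Prop :=
  Beta s t u ∨ Beta s u t ∨ Beta t s u

/-- `L` is a line in `T`. -/
def IsLineIn (T L : Set (EuclideanSpace ℝ (Fin n))) : Prop :=
  L ⊆ T ∧ (∃ s ∈ L, ∃ t ∈ L, s ≠ t) ∧
    (∀ s ∈ L, ∀ t ∈ L, ∀ u ∈ L, Coll s t u) ∧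
    (∀ s ∈ L, ∀ t ∈ L, s ≠ t → ∀ u ∈ T, (Beta s u t ∨ Beta s t u) → u ∈ L)

/-- `S` is an `m`-dimensional flat of ℝⁿ. -/
def IsFlat (m : ℕ) (S : Set (EuclideanSpace ℝ (Fin n))) : Prop :=
  ∃ (h : EuclideanSpace ℝ (Fin n)) (v : Fin m → EuclideanSpace ℝ (Fin n)),
    LinearIndependent ℝ v ∧
    S = {u | ∃ r : Fin m → ℝ, u = h + ∑ i, r i • v i}

/-- Two lines in `T` intersect. -/
def LinesIntersect (L₁ L₂ : Set (EuclideanSpace ℝ (Fin n))) : Prop :=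
  L₁ ≠ L₂ ∧ (L₁ ∩ L₂).Nonempty

/-- `U` is a linearly regular `m`-dimensional flat. -/
def LinearlyRegularFlat (m : ℕ) (U : Set (EuclideanSpace ℝ (Fin n))) : Prop :=
  (∃ S, IsFlat m S ∧ U ⊆ S) ∧
  (¬ ∃ S, IsFlat (m - 1) S ∧ U ⊆ S) ∧
  -- linearly complete
  (∀ L, IsLineIn U L → ∀ L', IsLineIn (Set.univ) L' → L ⊆ L' →
      ∀ r ∈ L', ∀ ε > (0 : ℝ), ∃ s ∈ L, dist s r < ε) ∧
  -- linearly closed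
  (∀ L₁ L₂, IsLineIn U L₁ → IsLineIn U L₂ →
      (∃ L₁' L₂', IsLineIn (Set.univ) L₁' ∧ IsLineIn (Set.univ) L₂' ∧
          L₁ ⊆ L₁' ∧ L₂ ⊆ L₂' ∧ L₁' ≠ L₂' ∧ (L₁' ∩ L₂').Nonempty) →
      ∃ s ∈ U, s ∈ L₁ ∩ L₂)

/-- `T` extends linearly in `m`D. -/
def ExtendsLinearlyIn (m : ℕ) (T : Set (EuclideanSpace ℝ (Fin n))) : Prop :=
  ∃ U, LinearlyRegularFlat m U ∧
    ∃ ε > (0 : ℝ), ∃ x ∈ U ∩ T, ∀ u ∈ U, dist x u < ε → u ∈ T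

/-- `Q` is a sequence in `T`: a nonempty subset of a line in `T`. -/
def IsSequenceIn (T Q : Set (EuclideanSpace ℝ (Fin n))) : Prop :=
  Q.Nonempty ∧ ∃ L, IsLineIn T L ∧ Q ⊆ L

/-- `s` and `u` are linearly `(T ∖ Q)`-connected. -/
def LinConnected (T Q : Set (EuclideanSpace ℝ (Fin n)))
    (s u : EuclideanSpace ℝ (Fin n)) : Prop :=
  s ≠ u ∧ ∀ r ∈ T, BetaS s r u → r ∉ Q

/-- `Q` is a discretely spaced sequence in `T`. -/
def DiscretelySpaced (T Q : Set (EuclideanSpace ℝ (Fin n))) : Prop :=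
  IsSequenceIn T Q ∧
    ∀ s ∈ Q, ∀ t ∈ Q, s ≠ t →
      ∃ u ∈ T, u ≠ s ∧ Beta s u t ∧ ∀ r ∈ T, BetaS s r u → r ∉ Q

/-- `s` is a base point of `Q` in `T`. -/
def IsBasePoint (Q : Set (EuclideanSpace ℝ (Fin n)))
    (s : EuclideanSpace ℝ (Fin n)) : Prop :=
  s ∈ Q ∧ ∀ u ∈ Q, ∃ v ∈ Q, v ≠ u ∧ Beta s u v

/-- `Q` is a discretely infinite sequence in `T`. -/
def DiscretelyInfinite (T Q : Set (EuclideanSpace ℝ (Fin n))) : Prop :=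
  DiscretelySpaced T Q ∧ ∃ s, IsBasePoint Q s

/-- `s` is a zero-point of `Q`. -/
def IsZeroPoint (Q : Set (EuclideanSpace ℝ (Fin n)))
    (s : EuclideanSpace ℝ (Fin n)) : Prop :=
  s ∈ Q ∧ ¬ ∃ u ∈ Q \ {s}, ∃ v ∈ Q \ {s}, Beta u s v

/-- `Q` is an ω-like sequence in `T`. -/
def OmegaLike (T Q : Set (EuclideanSpace ℝ (Fin n))) : Prop :=
  DiscretelyInfinite T Q ∧ (∃ s, IsZeroPoint Q s) ∧
    ∀ r ∈ T, (∃ s ∈ Q \ {r}, ∃ u ∈ Q \ {r}, Beta s r u) →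
      ∃ s' ∈ Q \ {r}, ∃ u' ∈ Q \ {r}, Beta s' r u' ∧
        ∀ v ∈ T, v ≠ r → BetaS s' v u' → v ∉ Q

/-- The successor relation `E` of a sequence `Q` in `T`. -/
def SuccRel (T Q : Set (EuclideanSpace ℝ (Fin n)))
    (u v : EuclideanSpace ℝ (Fin n)) : Prop :=
  u ∈ Q ∧ v ∈ Q ∧ LinConnected T Q u v ∧ ∃ z, IsZeroPoint Q z ∧ Beta z u v

/-- The rational plane. -/
def RationalPlane : Set (EuclideanSpace ℝ (Fin 2)) :=
  {p | ∀ i : Fin 2, ∃ q : ℚ, p i = (q : ℝ)}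

/-! The argument works for `K²` with `K` any subfield of `ℝ`, and `ℚ²` itself is the witness.
A line of `K²` through `s ≠ t` consists of exactly the points of `K²` on the real line through
`s` and `t`, so it contains `s + c • (t - s)` for every `c ∈ K ⊇ ℚ` and is dense in that real
line. If two distinct real lines through points of `K²` meet, then by Cramer's rule the parameter
of the meeting point is a quotient of determinants with entries in `K`, so it lies in `K²`. -/

open AffineMap

lemma beta_iff_wbtw {s t u : EuclideanSpace ℝ (Fin n)} : Beta s t u ↔ Wbtw ℝ s t u := by
  rw [Beta, eq_comm, dist_add_dist_eq_iff]

lemma Coll.collinear {s t u : EuclideanSpace ℝ (Fin n)} (h : Coll s t u) :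
    Collinear ℝ {s, t, u} := by
  rcases h with h | h | h
  · exact (beta_iff_wbtw.1 h).collinear
  · simpa only [Set.pair_comm] using (beta_iff_wbtw.1 h).collinear
  · simpa only [Set.insert_comm] using (beta_iff_wbtw.1 h).collinear

namespace IsLineIn

variable {T L : Set (EuclideanSpace ℝ (Fin n))} {s t : EuclideanSpace ℝ (Fin n)}

lemma subset_affineSpan (hL : IsLineIn T L) (hs : s ∈ L) (ht : t ∈ L) (hst : s ≠ t) :
    L ⊆ line[ℝ, s, t] := fun u hu ↦
  (hL.2.2.1 s hs t ht u hu).collinear.mem_affineSpan_of_mem_of_ne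
    (by simp) (by simp) (by simp) hst

lemma mem_of_mem_affineSpan (hL : IsLineIn T L) (hs : s ∈ L) (ht : t ∈ L) (hst : s ≠ t)
    {u : EuclideanSpace ℝ (Fin n)} (huT : u ∈ T) (hu : u ∈ line[ℝ, s, t]) : u ∈ L := by
  have hclosed := hL.2.2.2
  rcases (collinear_insert_of_mem_affineSpan_pair hu).wbtw_or_wbtw_or_wbtw with h | h | h
  · exact hclosed t ht s hs hst.symm u huT (Or.inr (beta_iff_wbtw.2 h.symm))
  · exact hclosed s hs t ht hst u huT (Or.inr (beta_iff_wbtw.2 h))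
  · exact hclosed s hs t ht hst u huT (Or.inl (beta_iff_wbtw.2 h.symm))

lemma eq_inter_affineSpan (hL : IsLineIn T L) (hs : s ∈ L) (ht : t ∈ L) (hst : s ≠ t) :
    L = T ∩ line[ℝ, s, t] :=
  Set.Subset.antisymm (Set.subset_inter hL.1 (hL.subset_affineSpan hs ht hst))
    fun _ hu ↦ hL.mem_of_mem_affineSpan hs ht hst hu.1 hu.2

lemma eq_affineSpan (hL : IsLineIn Set.univ L) (hs : s ∈ L) (ht : t ∈ L) (hst : s ≠ t) :
    L = line[ℝ, s, t] := by
  simpa using hL.eq_inter_affineSpan hs ht hst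

end IsLineIn

lemma isFlat_univ : IsFlat n (Set.univ : Set (EuclideanSpace ℝ (Fin n))) := by
  let b := (EuclideanSpace.basisFun (Fin n) ℝ).toBasis
  refine ⟨0, b, b.linearIndependent, ?_⟩
  ext u
  simpa using ⟨b.repr u, (b.sum_repr u).symm⟩

lemma LinearlyRegularFlat.extendsLinearlyIn {m : ℕ} {U : Set (EuclideanSpace ℝ (Fin n))}
    (hU : LinearlyRegularFlat m U) (hne : U.Nonempty) : ExtendsLinearlyIn m U :=
  ⟨U, hU, 1, one_pos, hne.some, ⟨hne.some_mem, hne.some_mem⟩, fun _ hu _ ↦ hu⟩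

def cross (u v : EuclideanSpace ℝ (Fin 2)) : ℝ := u 0 * v 1 - u 1 * v 0

lemma cross_smul_smul_self (a b : ℝ) (v : EuclideanSpace ℝ (Fin 2)) :
    cross (a • v) (b • v) = 0 := by
  simp only [cross, PiLp.smul_apply, smul_eq_mul]; ring

lemma exists_eq_smul_of_cross_eq_zero {u v : EuclideanSpace ℝ (Fin 2)} (hu : u ≠ 0)
    (h : cross u v = 0) : ∃ k : ℝ, v = k • u := by
  unfold cross at h
  by_cases h0 : u 0 = 0
  · have h1 : u 1 ≠ 0 := fun h1 ↦ hu (by ext i; fin_cases i <;> simp [h0, h1])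
    refine ⟨v 1 / u 1, ?_⟩
    ext i; fin_cases i
    · have hv0 : v 0 = 0 := by simpa [h0, h1] using h
      simpa [h0] using hv0
    · simp [h1]
  · refine ⟨v 0 / u 0, ?_⟩
    ext i; fin_cases i
    · simp [h0]
    · simp only [Fin.mk_one, PiLp.smul_apply, smul_eq_mul]
      field_simp
      linear_combination h

lemma affineSpan_pair_eq_of_cross_eq_zero {s₁ t₁ s₂ t₂ : EuclideanSpace ℝ (Fin 2)}
    (h₁ : s₁ ≠ t₁) (h₂ : s₂ ≠ t₂) (hcross : cross (t₁ - s₁) (t₂ - s₂) = 0)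
    (hmeet : ((line[ℝ, s₁, t₁] : Set (EuclideanSpace ℝ (Fin 2))) ∩ line[ℝ, s₂, t₂]).Nonempty) :
    line[ℝ, s₁, t₁] = line[ℝ, s₂, t₂] := by
  obtain ⟨k, hk⟩ := exists_eq_smul_of_cross_eq_zero (sub_ne_zero.2 h₁.symm) hcross
  have hk0 : k ≠ 0 := by
    rintro rfl
    exact h₂.symm (sub_eq_zero.1 (by simpa using hk))
  refine AffineSubspace.ext_of_direction_eq ?_ hmeet
  simp only [direction_affineSpan, vectorSpan_pair_rev, vsub_eq_sub, hk,
    Submodule.span_singleton_smul_eq (isUnit_iff_ne_zero.2 hk0)]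

lemma mul_cross_eq_of_lineMap_eq {s₁ t₁ s₂ t₂ : EuclideanSpace ℝ (Fin 2)} {c e : ℝ}
    (h : lineMap s₁ t₁ c = lineMap s₂ t₂ e) :
    c * cross (t₁ - s₁) (t₂ - s₂) = cross (s₂ - s₁) (t₂ - s₂) := by
  have h0 := congrArg (· 0) h
  have h1 := congrArg (· 1) h
  simp only [lineMap_apply_module', PiLp.add_apply, PiLp.smul_apply, PiLp.sub_apply,
    smul_eq_mul] at h0 h1
  simp only [cross, PiLp.sub_apply]
  linear_combination (t₂ 1 - s₂ 1) * h0 - (t₂ 0 - s₂ 0) * h1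

def subfieldPlane (K : Subfield ℝ) : Set (EuclideanSpace ℝ (Fin 2)) := {p | ∀ i, p i ∈ K}

section subfieldPlane

variable {K : Subfield ℝ} {s t u v : EuclideanSpace ℝ (Fin 2)}

lemma zero_mem_subfieldPlane : (0 : EuclideanSpace ℝ (Fin 2)) ∈ subfieldPlane K :=
  fun _ ↦ K.zero_mem

lemma sub_mem_subfieldPlane (hs : s ∈ subfieldPlane K) (ht : t ∈ subfieldPlane K) :
    s - t ∈ subfieldPlane K :=
  fun i ↦ K.sub_mem (hs i) (ht i)

lemma cross_mem (hu : u ∈ subfieldPlane K) (hv : v ∈ subfieldPlane K) : cross u v ∈ K :=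
  K.sub_mem (K.mul_mem (hu 0) (hv 1)) (K.mul_mem (hu 1) (hv 0))

lemma lineMap_mem_subfieldPlane (hs : s ∈ subfieldPlane K) (ht : t ∈ subfieldPlane K)
    {c : ℝ} (hc : c ∈ K) : lineMap s t c ∈ subfieldPlane K := fun i ↦ by
  simpa only [lineMap_apply_module, PiLp.add_apply, PiLp.smul_apply, smul_eq_mul] using
    K.add_mem (K.mul_mem (K.sub_mem K.one_mem hc) (hs i)) (K.mul_mem hc (ht i))

lemma single_mem_subfieldPlane (i : Fin 2) :
    EuclideanSpace.single i (1 : ℝ) ∈ subfieldPlane K := fun j ↦ by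
  by_cases h : j = i <;> simp [h, K.one_mem, K.zero_mem]

lemma subfieldPlane_not_subset_isFlat_one :
    ¬ ∃ S, IsFlat 1 S ∧ subfieldPlane K ⊆ S := by
  rintro ⟨S, ⟨h, v, -, rfl⟩, hsub⟩
  obtain ⟨r₀, hr₀⟩ := hsub (zero_mem_subfieldPlane (K := K))
  obtain ⟨r₁, hr₁⟩ := hsub (single_mem_subfieldPlane (K := K) 0)
  obtain ⟨r₂, hr₂⟩ := hsub (single_mem_subfieldPlane (K := K) 1)
  simp only [Finset.univ_unique, Finset.sum_singleton] at hr₀ hr₁ hr₂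
  have hh : h = -(r₀ default • v default) := by rw [eq_neg_iff_add_eq_zero, ← hr₀]
  have hmul {w : EuclideanSpace ℝ (Fin 2)} {r : Fin 1 → ℝ} (hw : w = h + r default • v default) :
      w = (r default - r₀ default) • v default := by
    rw [hw, hh]; module
  have key := cross_smul_smul_self (r₁ default - r₀ default) (r₂ default - r₀ default)
    (v default)
  rw [← hmul hr₁, ← hmul hr₂] at key
  simp [cross] at key


lemma linearlyComplete_subfieldPlane :
    ∀ L, IsLineIn (subfieldPlane K) L → ∀ L', IsLineIn Set.univ L' → L ⊆ L' →
      ∀ r ∈ L', ∀ ε > (0 : ℝ), ∃ s ∈ L, dist s r < ε := by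
  intro L hL L' hL' hLL' r hr ε hε
  obtain ⟨s, hs, t, ht, hst⟩ := hL.2.1
  rw [hL'.eq_affineSpan (hLL' hs) (hLL' ht) hst,
    SetLike.mem_coe, mem_affineSpan_pair_iff_exists_lineMap_eq] at hr
  obtain ⟨c, rfl⟩ := hr
  have hd : 0 < dist s t := dist_pos.2 hst
  obtain ⟨q, hq⟩ := exists_rat_near c (div_pos hε hd)
  have hqK : lineMap s t (q : ℝ) ∈ subfieldPlane K :=
    lineMap_mem_subfieldPlane (hL.1 hs) (hL.1 ht) (SubfieldClass.ratCast_mem K q)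
  refine ⟨_, hL.mem_of_mem_affineSpan hs ht hst hqK (lineMap_mem_affineSpan_pair _ _ _), ?_⟩
  rw [dist_lineMap_lineMap, Real.dist_eq, abs_sub_comm]
  exact (lt_div_iff₀ hd).1 hq

lemma mem_subfieldPlane_of_mem_two_lines {s₁ t₁ s₂ t₂ p : EuclideanSpace ℝ (Fin 2)}
    (hs₁ : s₁ ∈ subfieldPlane K) (ht₁ : t₁ ∈ subfieldPlane K)
    (hs₂ : s₂ ∈ subfieldPlane K) (ht₂ : t₂ ∈ subfieldPlane K)
    (h₁ : s₁ ≠ t₁) (h₂ : s₂ ≠ t₂) (hne : line[ℝ, s₁, t₁] ≠ line[ℝ, s₂, t₂])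
    (hp₁ : p ∈ line[ℝ, s₁, t₁]) (hp₂ : p ∈ line[ℝ, s₂, t₂]) : p ∈ subfieldPlane K := by
  have hcross : cross (t₁ - s₁) (t₂ - s₂) ≠ 0 := fun h ↦
    hne (affineSpan_pair_eq_of_cross_eq_zero h₁ h₂ h ⟨p, hp₁, hp₂⟩)
  obtain ⟨c, rfl⟩ := mem_affineSpan_pair_iff_exists_lineMap_eq.1 hp₁
  obtain ⟨e, he⟩ := mem_affineSpan_pair_iff_exists_lineMap_eq.1 hp₂
  have hc : c = cross (s₂ - s₁) (t₂ - s₂) / cross (t₁ - s₁) (t₂ - s₂) := by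
    rw [eq_div_iff hcross, mul_cross_eq_of_lineMap_eq he.symm]
  exact lineMap_mem_subfieldPlane hs₁ ht₁ (hc ▸ K.div_mem
    (cross_mem (sub_mem_subfieldPlane hs₂ hs₁) (sub_mem_subfieldPlane ht₂ hs₂))
    (cross_mem (sub_mem_subfieldPlane ht₁ hs₁) (sub_mem_subfieldPlane ht₂ hs₂)))

lemma linearlyClosed_subfieldPlane :
    ∀ L₁ L₂, IsLineIn (subfieldPlane K) L₁ → IsLineIn (subfieldPlane K) L₂ →
      (∃ L₁' L₂', IsLineIn Set.univ L₁' ∧ IsLineIn Set.univ L₂' ∧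
          L₁ ⊆ L₁' ∧ L₂ ⊆ L₂' ∧ L₁' ≠ L₂' ∧ (L₁' ∩ L₂').Nonempty) →
      ∃ s ∈ subfieldPlane K, s ∈ L₁ ∩ L₂ := by
  rintro L₁ L₂ hL₁ hL₂ ⟨L₁', L₂', hL₁', hL₂', hsub₁, hsub₂, hne, p, hp₁, hp₂⟩
  obtain ⟨s₁, hs₁, t₁, ht₁, h₁⟩ := hL₁.2.1
  obtain ⟨s₂, hs₂, t₂, ht₂, h₂⟩ := hL₂.2.1
  rw [hL₁'.eq_affineSpan (hsub₁ hs₁) (hsub₁ ht₁) h₁] at hp₁ hne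
  rw [hL₂'.eq_affineSpan (hsub₂ hs₂) (hsub₂ ht₂) h₂] at hp₂ hne
  have hpK := mem_subfieldPlane_of_mem_two_lines (hL₁.1 hs₁) (hL₁.1 ht₁) (hL₂.1 hs₂) (hL₂.1 ht₂)
    h₁ h₂ (fun h ↦ hne (congrArg _ h)) hp₁ hp₂
  exact ⟨p, hpK, hL₁.mem_of_mem_affineSpan hs₁ ht₁ h₁ hpK hp₁,
    hL₂.mem_of_mem_affineSpan hs₂ ht₂ h₂ hpK hp₂⟩

variable (K) in
lemma linearlyRegularFlat_subfieldPlane : LinearlyRegularFlat 2 (subfieldPlane K) :=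
  ⟨⟨Set.univ, isFlat_univ, Set.subset_univ _⟩, subfieldPlane_not_subset_isFlat_one,
    linearlyComplete_subfieldPlane, linearlyClosed_subfieldPlane⟩

end subfieldPlane

lemma rationalPlane_eq_subfieldPlane :
    RationalPlane = subfieldPlane (Rat.castHom ℝ).fieldRange :=
  Set.ext fun _ ↦ forall_congr' fun _ ↦ by simp [RingHom.mem_fieldRange, eq_comm]

theorem stmt_8 : ExtendsLinearlyIn 2 RationalPlane :=
  rationalPlane_eq_subfieldPlane ▸
    (linearlyRegularFlat_subfieldPlane _).extendsLinearlyIn ⟨0, zero_mem_subfieldPlane⟩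
end

section
/- Let Q be an ω-like sequence in ℝⁿ and let E be its successor relation. Then the structure (Q, E) is isomorphic to (ℕ, succ), where succ is the usual successor relation on ℕ. -/
variable {n : ℕ}

/-- point on parametrized line -/
noncomputable def pt (z v : EuclideanSpace ℝ (Fin n)) (a : ℝ) : EuclideanSpace ℝ (Fin n) := z + a • v

lemma pt_dist (z v : EuclideanSpace ℝ (Fin n)) (a b : ℝ) :
    dist (pt z v a) (pt z v b) = |a - b| * ‖v‖ := by
  rw [dist_eq_norm]
  have h : pt z v a - pt z v b = (a - b) • v := by unfold pt; module
  rw [h, norm_smul, Real.norm_eq_abs]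

lemma pt_inj {z v : EuclideanSpace ℝ (Fin n)} (hv : v ≠ 0) {a b : ℝ}
    (h : pt z v a = pt z v b) : a = b := by
  have h2 : (a - b) • v = 0 := by
    have h3 : pt z v a - pt z v b = (a - b) • v := by unfold pt; module
    rw [← h3, h, sub_self]
  rcases smul_eq_zero.mp h2 with h' | h'
  · exact sub_eq_zero.mp h'
  · exact absurd h' hv

lemma abs_between (a b c : ℝ) :
    |a - c| = |a - b| + |b - c| ↔ (a ≤ b ∧ b ≤ c) ∨ (c ≤ b ∧ b ≤ a) := by
  constructor
  · intro h
    rcases le_total a c with hac | hac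
    · rw [abs_of_nonpos (by linarith)] at h
      left
      cases abs_cases (a - b) <;> cases abs_cases (b - c) <;> constructor <;> linarith
    · rw [abs_of_nonneg (by linarith)] at h
      right
      cases abs_cases (a - b) <;> cases abs_cases (b - c) <;> constructor <;> linarith
  · rintro (⟨h1, h2⟩ | ⟨h1, h2⟩)
    · rw [abs_of_nonpos (by linarith), abs_of_nonpos (by linarith),
        abs_of_nonpos (by linarith)]; ring
    · rw [abs_of_nonneg (by linarith), abs_of_nonneg (by linarith),
        abs_of_nonneg (by linarith)]; ring

lemma pt_beta {z v : EuclideanSpace ℝ (Fin n)} (hv : v ≠ 0) (a b c : ℝ) :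
    Beta (pt z v a) (pt z v b) (pt z v c) ↔ ((a ≤ b ∧ b ≤ c) ∨ (c ≤ b ∧ b ≤ a)) := by
  have hv' : (0:ℝ) < ‖v‖ := norm_pos_iff.mpr hv
  unfold Beta
  rw [pt_dist, pt_dist, pt_dist, ← abs_between a b c]
  constructor
  · intro h
    have h2 : |a - c| * ‖v‖ = (|a - b| + |b - c|) * ‖v‖ := by rw [add_mul]; exact h
    exact mul_right_cancel₀ (ne_of_gt hv') h2
  · intro h; rw [h, add_mul]

lemma beta_wbtw {s t u : EuclideanSpace ℝ (Fin n)} (h : Beta s t u) : Wbtw ℝ s t u :=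
  dist_add_dist_eq_iff.mp h.symm

lemma wbtw_param {x u y : EuclideanSpace ℝ (Fin n)} (h : Wbtw ℝ x u y) :
    ∃ t : ℝ, 0 ≤ t ∧ t ≤ 1 ∧ u = x + t • (y - x) := by
  obtain ⟨t, ⟨ht0, ht1⟩, rfl⟩ := h
  exact ⟨t, ht0, ht1, by rw [AffineMap.lineMap_apply_module]; module⟩

lemma pt_wbtw_rep {z v : EuclideanSpace ℝ (Fin n)} {a c : ℝ}
    {u : EuclideanSpace ℝ (Fin n)} (h : Wbtw ℝ (pt z v a) u (pt z v c)) :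
    ∃ g : ℝ, u = pt z v g := by
  obtain ⟨t, _, _, hu⟩ := wbtw_param h
  refine ⟨a + t * (c - a), ?_⟩
  rw [hu]; unfold pt; module

lemma pt_zero (z v : EuclideanSpace ℝ (Fin n)) : pt z v 0 = z := by simp [pt]

theorem stmt_9 (Q : Set (EuclideanSpace ℝ (Fin n)))
    (hQ : OmegaLike (Set.univ) Q) :
    ∃ h : ℕ → EuclideanSpace ℝ (Fin n),
      (∀ i, h i ∈ Q) ∧ Function.Injective h ∧ (∀ q ∈ Q, ∃ i, h i = q) ∧
      ∀ i j, SuccRel (Set.univ) Q (h i) (h j) ↔ j = i + 1 := by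
  classical
  obtain ⟨⟨⟨⟨hQne, L, hLline, hQL⟩, hSpace⟩, s₀, hs₀Q, hs₀⟩, ⟨z, hzQ, hzNo⟩, hSep⟩ := hQ
  have hColl := hLline.2.2.1
  obtain ⟨w, hwQ, hwz, -⟩ := hs₀ z hzQ
  have hv : w - z ≠ 0 := sub_ne_zero.mpr hwz
  have hPinj : ∀ {a b : ℝ}, pt z (w - z) a = pt z (w - z) b → a = b := fun h => pt_inj hv h
  have hPb : ∀ a b c : ℝ, Beta (pt z (w-z) a) (pt z (w-z) b) (pt z (w-z) c) ↔
      ((a ≤ b ∧ b ≤ c) ∨ (c ≤ b ∧ b ≤ a)) := fun a b c => pt_beta hv a b c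
  -- every point of Q is on the nonnegative ray from z
  have hrep : ∀ q ∈ Q, ∃ a : ℝ, 0 ≤ a ∧ pt z (w-z) a = q := by
    intro q hq
    rcases hColl z (hQL hzQ) q (hQL hq) w (hQL hwQ) with hb | hb | hb
    · obtain ⟨t, ht0, ht1, hu⟩ := wbtw_param (beta_wbtw hb)
      exact ⟨t, ht0, hu.symm⟩
    · obtain ⟨t, ht0, ht1, hu⟩ := wbtw_param (beta_wbtw hb)
      have ht0' : t ≠ 0 := by
        rintro rfl; simp only [zero_smul, add_zero] at hu; exact hwz hu
      have hq' : q - z = t⁻¹ • (w - z) := by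
        have h1 : w - z = t • (q - z) := by rw [hu]; module
        rw [h1, smul_smul, inv_mul_cancel₀ ht0', one_smul]
      refine ⟨t⁻¹, inv_nonneg.mpr ht0, ?_⟩
      show z + t⁻¹ • (w - z) = q
      rw [← hq']; module
    · by_cases hqz : q = z
      · exact ⟨0, le_refl 0, by rw [pt_zero, hqz]⟩
      · exact absurd ⟨q, ⟨hq, hqz⟩, w, ⟨hwQ, hwz⟩, hb⟩ hzNo
  set A : Set ℝ := {a : ℝ | pt z (w-z) a ∈ Q} with hAdef
  have hA0 : (0:ℝ) ∈ A := by show pt z (w-z) 0 ∈ Q; rw [pt_zero]; exact hzQ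
  have hAnn : ∀ a ∈ A, (0:ℝ) ≤ a := by
    intro a ha
    obtain ⟨b, hb0, hba⟩ := hrep (pt z (w-z) a) ha
    rwa [hPinj hba] at hb0
  have hQrep : ∀ q ∈ Q, ∃ a ∈ A, pt z (w-z) a = q := by
    intro q hq
    obtain ⟨a, -, h⟩ := hrep q hq
    exact ⟨a, show pt z (w-z) a ∈ Q from h ▸ hq, h⟩
  -- no maximum
  have hNoMax : ∀ a ∈ A, ∃ c ∈ A, a < c := by
    have hsz : s₀ = z := by
      by_contra hne
      obtain ⟨w', hw'Q, hw'z, hbz⟩ := hs₀ z hzQ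
      exact hzNo ⟨s₀, ⟨hs₀Q, hne⟩, w', ⟨hw'Q, hw'z⟩, hbz⟩
    intro a ha
    obtain ⟨c', hc'Q, hc'ne, hbc⟩ := hs₀ (pt z (w-z) a) ha
    obtain ⟨c, hcA, rfl⟩ := hQrep c' hc'Q
    have hb : Beta (pt z (w-z) 0) (pt z (w-z) a) (pt z (w-z) c) := by
      rw [hsz] at hbc; rw [pt_zero]; exact hbc
    rcases (hPb 0 a c).mp hb with ⟨h1, h2⟩ | ⟨h1, h2⟩
    · exact ⟨c, hcA, lt_of_le_of_ne h2 (fun h => hc'ne (congrArg _ h.symm))⟩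
    · have h3 := hAnn a ha
      have h4 := hAnn c hcA
      have hca : c = a := le_antisymm h1 (by linarith)
      exact absurd (congrArg (pt z (w-z)) hca) hc'ne
  -- gap after each point
  have hGap : ∀ a ∈ A, ∀ c ∈ A, a < c → ∃ g, a < g ∧ ∀ e ∈ A, ¬(a < e ∧ e < g) := by
    intro a ha c hc hac
    obtain ⟨u, -, hune, hbu, hblock⟩ :=
      hSpace (pt z (w-z) a) ha (pt z (w-z) c) hc (fun h => (ne_of_lt hac) (hPinj h))
    obtain ⟨g, rfl⟩ := pt_wbtw_rep (beta_wbtw hbu)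
    have hg : a < g := by
      rcases (hPb a g c).mp hbu with ⟨h1, h2⟩ | ⟨h1, h2⟩
      · exact lt_of_le_of_ne h1 (fun h => hune (congrArg _ h.symm))
      · exact lt_of_lt_of_le hac h1
    refine ⟨g, hg, ?_⟩
    rintro e he ⟨h1, h2⟩
    exact hblock (pt z (w-z) e) (Set.mem_univ _)
      ⟨(hPb a e g).mpr (Or.inl ⟨le_of_lt h1, le_of_lt h2⟩),
        fun h => (ne_of_lt h1) (hPinj h),
        fun h => (ne_of_lt h2) (hPinj h)⟩ he
  -- separation around any real point squeezed by A
  have hSepR : ∀ ρ : ℝ, ∀ a ∈ A, ∀ c ∈ A, a ≠ ρ → c ≠ ρ → a ≤ ρ → ρ ≤ c →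
      ∃ lo ∈ A, ∃ hi ∈ A, lo < ρ ∧ ρ < hi ∧ ∀ e ∈ A, e ≠ ρ → ¬(lo < e ∧ e < hi) := by
    intro ρ a ha c hc haρ hcρ h1 h2
    have hprem : ∃ s ∈ Q \ {pt z (w-z) ρ}, ∃ u ∈ Q \ {pt z (w-z) ρ},
        Beta s (pt z (w-z) ρ) u :=
      ⟨pt z (w-z) a, ⟨ha, fun h => haρ (hPinj h)⟩,
        pt z (w-z) c, ⟨hc, fun h => hcρ (hPinj h)⟩,
        (hPb a ρ c).mpr (Or.inl ⟨h1, h2⟩)⟩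
    obtain ⟨s', ⟨hs'Q, hs'ne⟩, u', ⟨hu'Q, hu'ne⟩, hbs, hblock⟩ :=
      hSep (pt z (w-z) ρ) (Set.mem_univ _) hprem
    obtain ⟨x, hxA, rfl⟩ := hQrep s' hs'Q
    obtain ⟨y, hyA, rfl⟩ := hQrep u' hu'Q
    have hxρ : x ≠ ρ := fun h => hs'ne (congrArg _ h)
    have hyρ : y ≠ ρ := fun h => hu'ne (congrArg _ h)
    rcases (hPb x ρ y).mp hbs with ⟨k1, k2⟩ | ⟨k1, k2⟩
    · refine ⟨x, hxA, y, hyA, lt_of_le_of_ne k1 hxρ, lt_of_le_of_ne k2 (Ne.symm hyρ), ?_⟩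
      rintro e heA heρ ⟨m1, m2⟩
      exact hblock (pt z (w-z) e) (Set.mem_univ _) (fun h => heρ (hPinj h))
        ⟨(hPb x e y).mpr (Or.inl ⟨le_of_lt m1, le_of_lt m2⟩),
          fun h => (ne_of_lt m1) (hPinj h),
          fun h => (ne_of_lt m2) (hPinj h)⟩ heA
    · refine ⟨y, hyA, x, hxA, lt_of_le_of_ne k1 hyρ, lt_of_le_of_ne k2 (Ne.symm hxρ), ?_⟩
      rintro e heA heρ ⟨m1, m2⟩
      exact hblock (pt z (w-z) e) (Set.mem_univ _) (fun h => heρ (hPinj h))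
        ⟨(hPb x e y).mpr (Or.inr ⟨le_of_lt m1, le_of_lt m2⟩),
          fun h => (ne_of_lt m2) (hPinj h).symm,
          fun h => (ne_of_lt m1) (hPinj h).symm⟩ heA
  -- each element of A has an immediate successor in A
  have hSucc : ∀ a ∈ A, ∃ m, m ∈ A ∧ a < m ∧ ∀ e ∈ A, a < e → m ≤ e := by
    intro a ha
    obtain ⟨c, hcA, hac⟩ := hNoMax a ha
    obtain ⟨g, hg, hgap⟩ := hGap a ha c hcA hac
    set S : Set ℝ := {x | x ∈ A ∧ a < x} with hS
    have hcS : c ∈ S := ⟨hcA, hac⟩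
    have hSne : S.Nonempty := ⟨c, hcS⟩
    have hbdd : BddBelow S := ⟨a, fun x hx => le_of_lt hx.2⟩
    have hgm' : g ≤ sInf S := le_csInf hSne (by
      intro x hx
      by_contra hlt
      push_neg at hlt
      exact hgap x hx.1 ⟨hx.2, hlt⟩)
    have ham : a < sInf S := lt_of_lt_of_le hg hgm'
    have hmc : sInf S ≤ c := csInf_le hbdd hcS
    have hmA : sInf S ∈ A := by
      by_contra hmA
      obtain ⟨lo, hloA, hi, hhiA, hlom, hmhi, hblock⟩ :=
        hSepR (sInf S) a ha c hcA (ne_of_lt ham) (fun h => hmA (h ▸ hcA)) (le_of_lt ham) hmc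
      obtain ⟨x, hxS, hxhi⟩ := exists_lt_of_csInf_lt hSne hmhi
      have hxm : x ≠ sInf S := fun h => hmA (h ▸ hxS.1)
      have hmx : sInf S ≤ x := csInf_le hbdd hxS
      exact hblock x hxS.1 hxm ⟨lt_of_lt_of_le hlom hmx, hxhi⟩
    exact ⟨sInf S, hmA, ham, fun e he hae => csInf_le hbdd ⟨he, hae⟩⟩
  have hSucc' : ∀ a : ℝ, ∃ m, a ∈ A → (m ∈ A ∧ a < m ∧ ∀ e ∈ A, a < e → m ≤ e) := by
    intro a
    by_cases h : a ∈ A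
    · obtain ⟨m, hm⟩ := hSucc a h; exact ⟨m, fun _ => hm⟩
    · exact ⟨0, fun h' => absurd h' h⟩
  choose σ hσ using hSucc'
  set f : ℕ → ℝ := fun k => Nat.rec 0 (fun _ x => σ x) k with hfdef
  have hf0 : f 0 = 0 := rfl
  have hfs : ∀ k, f (k + 1) = σ (f k) := fun k => rfl
  have hfA : ∀ k, f k ∈ A := by
    intro k
    induction k with
    | zero => exact hA0
    | succ k ih => exact (hσ (f k) ih).1
  have hflt : ∀ k, f k < f (k + 1) := fun k => (hσ (f k) (hfA k)).2.1
  have hfmin : ∀ k, ∀ e ∈ A, f k < e → f (k + 1) ≤ e := fun k e he h =>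
    (hσ (f k) (hfA k)).2.2 e he h
  have hfsm : StrictMono f := strictMono_nat_of_lt_succ hflt
  -- surjectivity of the enumeration onto A
  have hsurjA : ∀ b ∈ A, ∃ k, f k = b := by
    intro b hb
    by_contra hno
    push_neg at hno
    have hfb : ∀ k, f k < b := by
      intro k
      induction k with
      | zero =>
        rcases eq_or_lt_of_le (hAnn b hb) with h | h
        · exact absurd (hf0.trans h) (hno 0)
        · rw [hf0]; exact h
      | succ k ih => exact lt_of_le_of_ne (hfmin k b hb ih) (hno (k + 1))
    have hrne : (Set.range f).Nonempty := ⟨f 0, 0, rfl⟩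
    have hrbdd : BddAbove (Set.range f) := ⟨b, by rintro x ⟨k, rfl⟩; exact le_of_lt (hfb k)⟩
    have hfρ : ∀ k, f k < sSup (Set.range f) := fun k =>
      lt_of_lt_of_le (hflt k) (le_csSup hrbdd ⟨k + 1, rfl⟩)
    have hρb : sSup (Set.range f) ≤ b :=
      csSup_le hrne (by rintro x ⟨k, rfl⟩; exact le_of_lt (hfb k))
    have h0ρ : (0:ℝ) < sSup (Set.range f) := by
      have := hfρ 0; rwa [hf0] at this
    obtain ⟨c, hcA, hρc, hcρ⟩ : ∃ c ∈ A, sSup (Set.range f) ≤ c ∧ c ≠ sSup (Set.range f) := by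
      rcases eq_or_lt_of_le hρb with heq | hlt
      · obtain ⟨c, hcA, hbc⟩ := hNoMax b hb
        exact ⟨c, hcA, heq ▸ le_of_lt hbc, heq ▸ ne_of_gt hbc⟩
      · exact ⟨b, hb, le_of_lt hlt, ne_of_gt hlt⟩
    obtain ⟨lo, hloA, hi, hhiA, hloρ, hρhi, hblock⟩ :=
      hSepR (sSup (Set.range f)) 0 hA0 c hcA (ne_of_lt h0ρ) hcρ (le_of_lt h0ρ) hρc
    obtain ⟨x, hxr, hlox⟩ := exists_lt_of_lt_csSup hrne hloρ
    obtain ⟨k, rfl⟩ := hxr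
    exact hblock (f k) (hfA k) (ne_of_lt (hfρ k)) ⟨hlox, lt_trans (hfρ k) hρhi⟩
  -- assemble
  refine ⟨fun k => pt z (w-z) (f k), fun k => hfA k,
    fun i j h => hfsm.injective (hPinj h), ?_, ?_⟩
  · intro q hq
    obtain ⟨a, haA, rfl⟩ := hQrep q hq
    obtain ⟨k, hk⟩ := hsurjA a haA
    exact ⟨k, congrArg (pt z (w-z)) hk⟩
  · intro i j
    constructor
    · rintro ⟨hu, hv', ⟨hne, hblock⟩, z₂, ⟨hz₂Q, hz₂No⟩, hbeta⟩
      obtain ⟨b, hbA, rfl⟩ := hQrep z₂ hz₂Q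
      have hb0 : b = 0 := by
        by_contra hbne
        have hb0' : 0 < b := lt_of_le_of_ne (hAnn b hbA) (Ne.symm hbne)
        obtain ⟨c, hcA, hbc⟩ := hNoMax b hbA
        exact hz₂No ⟨pt z (w-z) 0, ⟨hA0, fun h => hbne (hPinj h).symm⟩,
          pt z (w-z) c, ⟨hcA, fun h => (ne_of_gt hbc) (hPinj h)⟩,
          (hPb 0 b c).mpr (Or.inl ⟨le_of_lt hb0', le_of_lt hbc⟩)⟩
      subst hb0
      have hij : f i ≤ f j := by
        rcases (hPb 0 (f i) (f j)).mp hbeta with ⟨h1, h2⟩ | ⟨h1, h2⟩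
        · exact h2
        · have h3 := hAnn (f i) (hfA i)
          have h4 := hAnn (f j) (hfA j)
          linarith
      have hneij : f i ≠ f j := fun h => hne (congrArg _ h)
      have hlt : i < j := hfsm.lt_iff_lt.mp (lt_of_le_of_ne hij hneij)
      by_contra hjne
      have hj : i + 1 < j := by omega
      have h1 : f i < f (i + 1) := hflt i
      have h2 : f (i + 1) < f j := hfsm hj
      exact hblock (pt z (w-z) (f (i + 1))) (Set.mem_univ _)
        ⟨(hPb (f i) (f (i + 1)) (f j)).mpr (Or.inl ⟨le_of_lt h1, le_of_lt h2⟩),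
          fun h => (ne_of_lt h1) (hPinj h),
          fun h => (ne_of_lt h2) (hPinj h)⟩ (hfA (i + 1))
    · rintro rfl
      refine ⟨hfA i, hfA (i + 1),
        ⟨fun h => (ne_of_lt (hflt i)) (hPinj h), ?_⟩,
        pt z (w-z) 0, ⟨hA0, ?_⟩, ?_⟩
      · rintro r - ⟨hbr, hne1, hne2⟩ hrQ
        obtain ⟨e, heA, rfl⟩ := hQrep r hrQ
        rcases (hPb (f i) e (f (i + 1))).mp hbr with ⟨h1, h2⟩ | ⟨h1, h2⟩
        · have he1 : f i < e := lt_of_le_of_ne h1 (fun h => hne1 (congrArg _ h))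
          have he2 : e < f (i + 1) := lt_of_le_of_ne h2 (fun h => hne2 (congrArg _ h))
          exact absurd (hfmin i e heA he1) (not_le.mpr he2)
        · have := hflt i; linarith
      · rw [pt_zero]; exact hzNo
      · exact (hPb 0 (f i) (f (i + 1))).mpr
          (Or.inl ⟨hAnn (f i) (hfA i), le_of_lt (hflt i)⟩)
end

section
/- A discretely infinite sequence Q in T ⊆ ℝⁿ has at most one zero-point. -/
variable {n : ℕ}

theorem stmt_11 (T Q : Set (EuclideanSpace ℝ (Fin n)))
    (hQ : DiscretelyInfinite T Q) :
    ∀ s t, IsZeroPoint Q s → IsZeroPoint Q t → s = t := by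
  obtain ⟨_, z, hzQ, hzbase⟩ := hQ
  have key : ∀ s, IsZeroPoint Q s → s = z := by
    rintro s ⟨hsQ, hno⟩
    by_contra hne
    obtain ⟨v, hvQ, hvs, hbeta⟩ := hzbase s hsQ
    exact hno ⟨z, ⟨hzQ, fun h => hne (Set.mem_singleton_iff.mp h).symm⟩,
      v, ⟨hvQ, fun h => hvs (Set.mem_singleton_iff.mp h)⟩, hbeta⟩
  intro s t hs ht
  rw [key s hs, key t ht]
end

section
/- Let Q be an ω-like sequence in ℝⁿ (with T = ℝⁿ), and let h : ℕ → Q be the embedding of (ℕ,succ) into (Q,E) starting at the zero-point. If the range of h were bounded above along the line containing Q, then by Dedekind completeness of ℝ the least upper bound s of the range of h satisfies s ∉ Q, and in fact no point t ∈ Q lies beyond s; consequently h is surjective onto Q. -/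
variable {n : ℕ}

lemma aux_abs {a x b : ℝ} (h : |a - b| = |a - x| + |x - b|) :
    (a ≤ x ∧ x ≤ b) ∨ (b ≤ x ∧ x ≤ a) := by
  rcases abs_cases (a - b) with ⟨h1, h1'⟩ | ⟨h1, h1'⟩ <;>
  rcases abs_cases (a - x) with ⟨h2, h2'⟩ | ⟨h2, h2'⟩ <;>
  rcases abs_cases (x - b) with ⟨h3, h3'⟩ | ⟨h3, h3'⟩ <;>
  rw [h1, h2, h3] at h <;>
  first
    | (left; constructor <;> linarith)
    | (right; constructor <;> linarith)

lemma aux_abs' {a x b : ℝ} (h : (a ≤ x ∧ x ≤ b) ∨ (b ≤ x ∧ x ≤ a)) :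
    |a - b| = |a - x| + |x - b| := by
  rcases h with ⟨h1, h2⟩ | ⟨h1, h2⟩
  · rw [abs_of_nonpos (by linarith), abs_of_nonpos (by linarith), abs_of_nonpos (by linarith)]; ring
  · rw [abs_of_nonneg (by linarith), abs_of_nonneg (by linarith), abs_of_nonneg (by linarith)]; ring

lemma dist_ray (z v : EuclideanSpace ℝ (Fin n)) (r r' : ℝ) :
    dist (z + r • v) (z + r' • v) = |r - r'| * ‖v‖ := by
  rw [dist_eq_norm]
  have h : (z + r • v) - (z + r' • v) = (r - r') • v := by module
  rw [h, norm_smul, Real.norm_eq_abs]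

lemma beta_coord {z v : EuclideanSpace ℝ (Fin n)} (hv : v ≠ 0) {a x b : ℝ} :
    Beta (z + a • v) (z + x • v) (z + b • v) ↔ ((a ≤ x ∧ x ≤ b) ∨ (b ≤ x ∧ x ≤ a)) := by
  have hvn : (0:ℝ) < ‖v‖ := norm_pos_iff.2 hv
  unfold Beta
  rw [dist_ray, dist_ray, dist_ray]
  constructor
  · intro hh
    apply aux_abs
    have h2 : |a - b| * ‖v‖ = (|a - x| + |x - b|) * ‖v‖ := by rw [add_mul]; exact hh
    exact mul_right_cancel₀ (ne_of_gt hvn) h2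
  · intro hh; rw [← add_mul, aux_abs' hh]

lemma beta_wbtw_s12 {s t u : EuclideanSpace ℝ (Fin n)} (hb : Beta s t u) :
    ∃ c : ℝ, 0 ≤ c ∧ c ≤ 1 ∧ t = s + c • (u - s) := by
  have hw : Wbtw ℝ s t u := by rw [← dist_add_dist_eq_iff]; exact hb.symm
  rcases hw with ⟨c, ⟨hc0, hc1⟩, heq⟩
  exact ⟨c, hc0, hc1, by rw [← heq, AffineMap.lineMap_apply_module]; module⟩


theorem stmt_12 (Q : Set (EuclideanSpace ℝ (Fin n)))
    (hQ : OmegaLike (Set.univ) Q)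
    (z : EuclideanSpace ℝ (Fin n)) (hz : IsZeroPoint Q z)
    (h : ℕ → EuclideanSpace ℝ (Fin n))
    (h0 : h 0 = z) (hmem : ∀ i, h i ∈ Q) (hinj : Function.Injective h)
    (hsucc : ∀ i, SuccRel (Set.univ) Q (h i) (h (i + 1))) :
    ∀ q ∈ Q, ∃ i, h i = q := by
  intro q hq
  by_contra hcon
  push_neg at hcon
  have hz1 : h 1 ≠ z := fun e => one_ne_zero (hinj (e.trans h0.symm))
  set v := h 1 - z with hvdef
  have hv : v ≠ 0 := sub_ne_zero.2 hz1
  have hcinj : ∀ a b : ℝ, z + a • v = z + b • v → a = b := by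
    intro a b e
    exact smul_left_injective ℝ hv (add_left_cancel e)
  obtain ⟨L, hL, hQL⟩ := hQ.1.1.1.2
  -- every point of Q lies on the nonnegative ray from z in direction v
  have hray : ∀ x ∈ Q, ∃ r : ℝ, 0 ≤ r ∧ x = z + r • v := by
    intro x hx
    have hcoll : Coll z (h 1) x := hL.2.2.1 z (hQL hz.1) (h 1) (hQL (hmem 1)) x (hQL hx)
    rcases hcoll with hb | hb | hb
    · rcases beta_wbtw_s12 hb with ⟨c, hc0, _, heq⟩
      have hcne : c ≠ 0 := by
        intro e; apply hz1; rw [e] at heq; simpa using heq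
      refine ⟨c⁻¹, inv_nonneg.2 hc0, ?_⟩
      have hveq : v = c • (x - z) := by rw [hvdef, heq]; module
      rw [hveq, smul_smul, inv_mul_cancel₀ hcne, one_smul]; module
    · rcases beta_wbtw_s12 hb with ⟨c, hc0, _, heq⟩
      exact ⟨c, hc0, by rw [heq]⟩
    · by_cases hxz : x = z
      · exact ⟨0, le_refl 0, by rw [hxz]; simp⟩
      · exact absurd ⟨h 1, ⟨hmem 1, hz1⟩, x, ⟨hx, hxz⟩, hb⟩ hz.2
  choose d hd0 hdeq using fun i => hray (h i) (hmem i)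
  have hd00 : d 0 = 0 := by
    have h1' : z + (0:ℝ) • v = z + d 0 • v := by rw [← (hdeq 0), h0]; simp
    exact (hcinj _ _ h1').symm
  -- the base point must be z
  obtain ⟨b, hbQ, hbprop⟩ := hQ.1.2
  have hbz : b = z := by
    by_contra hbz
    rcases hbprop z hz.1 with ⟨w, hwQ, hwz, hbw⟩
    exact hz.2 ⟨b, ⟨hbQ, hbz⟩, w, ⟨hwQ, hwz⟩, hbw⟩
  rw [hbz] at hbprop
  -- Q has no maximal point
  have hnomax : ∀ x ∈ Q, ∀ r : ℝ, x = z + r • v → 0 ≤ r →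
      ∃ r', r < r' ∧ z + r' • v ∈ Q := by
    intro x hx r hxe hr
    rcases hbprop x hx with ⟨w, hwQ, hwx, hbw⟩
    rcases hray w hwQ with ⟨rw', hrw0, hweq⟩
    have hb0 : Beta (z + (0:ℝ) • v) (z + r • v) (z + rw' • v) := by
      rw [zero_smul, add_zero, ← hxe, ← hweq]; exact hbw
    rcases (beta_coord hv).1 hb0 with ⟨_, hle⟩ | ⟨hle, hle'⟩
    · have hne : r ≠ rw' := fun e => hwx (by rw [hweq, ← e, ← hxe])
      exact ⟨rw', lt_of_le_of_ne hle hne, by rw [← hweq]; exact hwQ⟩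
    · exfalso
      have hr0 : r = 0 := le_antisymm hle' hr
      have hrw'0 : rw' = 0 := le_antisymm (hr0 ▸ hle) hrw0
      exact hwx (by rw [hweq, hxe, hr0, hrw'0])
  -- z is the unique zero point
  have hzu : ∀ z', IsZeroPoint Q z' → z' = z := by
    intro z' hz'
    by_contra hne
    rcases hray z' hz'.1 with ⟨r', hr0, hz'eq⟩
    rcases hnomax z' hz'.1 r' hz'eq hr0 with ⟨r2, hr2, hwQ⟩
    apply hz'.2
    refine ⟨z, ⟨hz.1, fun e => hne (e.symm)⟩, z + r2 • v,
      ⟨hwQ, fun e => absurd (hcinj _ _ (e.trans hz'eq)) (by intro h'; rw [h'] at hr2; linarith)⟩, ?_⟩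
    have := (beta_coord hv (z := z) (a := 0) (x := r') (b := r2)).2 (Or.inl ⟨hr0, hr2.le⟩)
    rwa [zero_smul, add_zero, ← hz'eq] at this
  -- the coordinates are strictly increasing
  have hmono : ∀ i, d i < d (i + 1) := by
    intro i
    obtain ⟨_, _, _, z'', hz'', hbz2⟩ := hsucc i
    rw [hzu z'' hz''] at hbz2
    have hb0 : Beta (z + (0:ℝ) • v) (z + d i • v) (z + d (i+1) • v) := by
      rw [zero_smul, add_zero, ← hdeq i, ← hdeq (i+1)]; exact hbz2
    have hne : d i ≠ d (i + 1) := by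
      intro e
      have : h i = h (i + 1) := by rw [hdeq i, hdeq (i+1), e]
      exact absurd (hinj this) (by omega)
    rcases (beta_coord hv).1 hb0 with ⟨_, hle⟩ | ⟨hle, hle'⟩
    · exact lt_of_le_of_ne hle hne
    · exfalso
      have h1' : d i = 0 := le_antisymm hle' (hd0 i)
      have h2' : d (i+1) = 0 := le_antisymm (h1' ▸ hle) (hd0 (i+1))
      exact hne (h1'.trans h2'.symm)
  obtain ⟨t, ht0, hqeq⟩ := hray q hq
  have hdt : ∀ i, d i ≠ t := fun i e => hcon i (by rw [hdeq i, e, ← hqeq])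
  by_cases hA : ∃ i, t < d i
  · -- some h i lies beyond q; take the least, then q is strictly between
    obtain ⟨j, hj1, hj2⟩ : ∃ j, d j < t ∧ t < d (j + 1) := by
      have hi := Nat.find_spec hA
      have hipos : Nat.find hA ≠ 0 := by
        intro e; rw [e, hd00] at hi; linarith
      refine ⟨Nat.find hA - 1, ?_, ?_⟩
      · exact lt_of_le_of_ne (not_lt.1 (Nat.find_min hA (by omega))) (hdt _)
      · have he : Nat.find hA - 1 + 1 = Nat.find hA := by omega
        rw [he]; exact hi
    obtain ⟨_, _, ⟨_, hconn⟩, _⟩ := hsucc j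
    refine absurd hq (hconn q (Set.mem_univ q) ⟨?_, ?_, ?_⟩)
    · rw [hdeq j, hdeq (j+1), hqeq]
      exact (beta_coord hv).2 (Or.inl ⟨hj1.le, hj2.le⟩)
    · intro e
      exact hdt j (hcinj _ _ (by rw [← hdeq j, ← hqeq]; exact e))
    · intro e
      exact hdt (j+1) (hcinj _ _ (by rw [← hdeq (j+1), ← hqeq]; exact e)).symm
  · -- all h i lie strictly before q: contradiction via the supremum point
    push_neg at hA
    have hAlt : ∀ i, d i < t := fun i => lt_of_le_of_ne (hA i) (hdt i)
    have hbdd : BddAbove (Set.range d) := ⟨t, by rintro x ⟨i, rfl⟩; exact hA i⟩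
    set s := sSup (Set.range d) with hsdef
    have hds : ∀ i, d i < s := fun i => lt_of_lt_of_le (hmono i) (le_csSup hbdd ⟨i+1, rfl⟩)
    have hst : s ≤ t := csSup_le ⟨d 0, ⟨0, rfl⟩⟩ (by rintro x ⟨i, rfl⟩; exact (hAlt i).le)
    have hs0 : 0 < s := by have := hds 0; rwa [hd00] at this
    obtain ⟨r2, hr2, hwQ⟩ := hnomax q hq t hqeq ht0
    have hzp : z ≠ z + s • v := by
      intro e
      have : (0:ℝ) = s := hcinj 0 s (by rw [← e]; simp)
      linarith
    have hwp : z + r2 • v ≠ z + s • v := by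
      intro e
      have := hcinj _ _ e
      linarith
    have hbzw : Beta z (z + s • v) (z + r2 • v) := by
      have := (beta_coord hv (z := z) (a := 0) (x := s) (b := r2)).2
        (Or.inl ⟨hs0.le, by linarith⟩)
      rwa [zero_smul, add_zero] at this
    obtain ⟨s', hs'mem, u', hu'mem, hbeta', hsep⟩ :=
      hQ.2.2 (z + s • v) (Set.mem_univ _)
        ⟨z, ⟨hz.1, hzp⟩, z + r2 • v, ⟨hwQ, hwp⟩, hbzw⟩
    obtain ⟨a, ha0, hs'eq⟩ := hray s' hs'mem.1
    obtain ⟨bb, hb0', hu'eq⟩ := hray u' hu'mem.1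
    have hane : a ≠ s := fun e => hs'mem.2 (by rw [hs'eq, e]; rfl)
    have hbne : bb ≠ s := fun e => hu'mem.2 (by rw [hu'eq, e]; rfl)
    rw [hs'eq, hu'eq] at hbeta'
    rcases (beta_coord hv).1 hbeta' with ⟨h1, h2⟩ | ⟨h1, h2⟩
    · have h1' : a < s := lt_of_le_of_ne h1 hane
      obtain ⟨x, ⟨i, rfl⟩, hxa⟩ := exists_lt_of_lt_csSup (Set.range_nonempty d) h1'
      refine absurd (hmem i) (hsep (h i) (Set.mem_univ _) ?_ ?_)
      · intro e
        have := hcinj _ _ ((hdeq i).symm.trans e)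
        exact absurd this (ne_of_lt (hds i))
      · refine ⟨?_, ?_, ?_⟩
        · rw [hs'eq, hu'eq, hdeq i]
          exact (beta_coord hv).2 (Or.inl ⟨hxa.le, le_trans (hds i).le h2⟩)
        · intro e
          rw [hs'eq, hdeq i] at e
          exact absurd (hcinj _ _ e) (ne_of_lt hxa)
        · intro e
          rw [hu'eq, hdeq i] at e
          exact absurd (hcinj _ _ e) (ne_of_lt (lt_of_lt_of_le (hds i) h2))
    · have h1' : bb < s := lt_of_le_of_ne h1 hbne
      obtain ⟨x, ⟨i, rfl⟩, hxa⟩ := exists_lt_of_lt_csSup (Set.range_nonempty d) h1'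
      refine absurd (hmem i) (hsep (h i) (Set.mem_univ _) ?_ ?_)
      · intro e
        have := hcinj _ _ ((hdeq i).symm.trans e)
        exact absurd this (ne_of_lt (hds i))
      · refine ⟨?_, ?_, ?_⟩
        · rw [hs'eq, hu'eq, hdeq i]
          exact (beta_coord hv).2 (Or.inr ⟨hxa.le, le_trans (hds i).le h2⟩)
        · intro e
          rw [hs'eq, hdeq i] at e
          exact absurd (hcinj _ _ e) (ne_of_gt (lt_of_lt_of_le (hds i) h2))
        · intro e
          rw [hu'eq, hdeq i] at e
          exact absurd (hcinj _ _ e) (ne_of_gt hxa)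
end

section
/- An ω-like sequence in ℝⁿ has exactly one zero-point, and this zero-point is also a base point of the sequence. -/
variable {n : ℕ}

theorem stmt_16 (Q : Set (EuclideanSpace ℝ (Fin n)))
    (hQ : OmegaLike (Set.univ) Q) :
    (∃! z, IsZeroPoint Q z) ∧ ∀ z, IsZeroPoint Q z → IsBasePoint Q z := by
  obtain ⟨⟨hds, s, hsQ, hs⟩, ⟨z0, hz0⟩, _⟩ := hQ
  have key : ∀ z, IsZeroPoint Q z → z = s := by
    intro z hz
    by_contra hne
    obtain ⟨v, hvQ, hvz, hb⟩ := hs z hz.1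
    exact hz.2 ⟨s, ⟨hsQ, fun h => hne (Set.mem_singleton_iff.mp h).symm⟩,
      v, ⟨hvQ, fun h => hvz (Set.mem_singleton_iff.mp h)⟩, hb⟩
  have hz0s : z0 = s := key z0 hz0
  refine ⟨⟨z0, hz0, fun z hz => (key z hz).trans hz0s.symm⟩, ?_⟩
  intro z hz
  rw [key z hz]
  exact ⟨hsQ, hs⟩
end
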